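/- Let D_{r₀}(j) be the hyperbolic ball of radius r₀ > 0 centered at j in ℍ³. There exists C = C(r₀) > 0 such that for any two geodesics h₁, h₂ with a common ideal endpoint, both intersecting D_{r₀}(j), and any ε > 0, ‖R_{h₁}^ε ∘ R_{h₂}^{-ε} - id‖ ≤ C · d_{r₀}(h₁, h₂) · ε, where d_{r₀}(h₁, h₂) is the Hausdorff-type hyperbolic distance between h₁ ∩ D_{r₀}(j) and h₂ ∩ D_{r₀}(j). -/

import Mathlib

/-- `e^{iε/2}`. -/
noncomputable def ee (ε : ℝ) : ℂ := Complex.exp (Complex.I * ε / 2)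

/-- The elliptic element of `SL(2,ℂ)` fixing `u, v ∈ ℂ` with rotation angle `ε`:
`T diag(e^{iε/2}, e^{-iε/2}) T⁻¹` with `T = !![v, u; 1, 1]`. -/
noncomputable def rotMat (u v : ℂ) (ε : ℝ) : Matrix (Fin 2) (Fin 2) ℂ :=
  (v - u)⁻¹ • !![v * ee ε - u * ee (-ε), u * v * (ee (-ε) - ee ε);
                 ee ε - ee (-ε), v * ee (-ε) - u * ee ε]

/-- Max-entry norm of a 2×2 complex matrix. -/
noncomputable def mnorm (M : Matrix (Fin 2) (Fin 2) ℂ) : ℝ :=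
  max (max (‖M 0 0‖) (‖M 0 1‖))
      (max (‖M 1 0‖) (‖M 1 1‖))

/-- The geodesic of `ℍ³ ≅ ℂ × ℝ` with ideal endpoints `u, v ∈ ℂ` (a Euclidean semicircle). -/
noncomputable def geodSet (u v : ℂ) : Set (ℂ × ℝ) :=
  {P | ∃ s : ℝ, s ∈ Set.Ioo (0:ℝ) 1 ∧
    P = (u + (s : ℂ) * (v - u), ‖v - u‖ * Real.sqrt (s * (1 - s)))}

/-- `cosh` of the hyperbolic distance between points of `ℍ³ ≅ ℂ × ℝ`. -/
noncomputable def coshDist (P Q : ℂ × ℝ) : ℝ :=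
  1 + (‖P.1 - Q.1‖ ^ 2 + (P.2 - Q.2) ^ 2) / (2 * P.2 * Q.2)

/-- Membership in the hyperbolic ball `D_{r₀}(j)` around `j = ((0:ℂ), 1)`. -/
def inBall (r₀ : ℝ) (P : ℂ × ℝ) : Prop :=
  0 < P.2 ∧ coshDist P ((0 : ℂ), 1) ≤ Real.cosh r₀

/-!
Both rotations fix `u`, so `R_{h₁}^ε R_{h₂}^{-ε}` is parabolic with fixed point `u`: it equals
`1 + β N` with `N = !![u, -u²; 1, -u]` nilpotent and
`β = ((v₂ - u)⁻¹ - (v₁ - u)⁻¹) (e^{-iε} - 1)`, where `|e^{-iε} - 1| ≤ ε`.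

An isometry of `ℍ³` sending `u` to `∞` maps the geodesic from `u` to `v` onto the vertical line
over `(v - u)⁻¹`. Hence `|(v₁ - u)⁻¹ - (v₂ - u)⁻¹|` is at most the horizontal distance between the
images of any `P ∈ h₁` and `Q ∈ h₂`, which is controlled by `d(P, Q)` and the heights of the images;
after multiplying by `1 + |u|²` such a height becomes a Busemann function at `u`, bounded by
`2 cosh d(P, j)`. For `dH ≤ 1` one takes `Q` within `dH` of a point `P` of `h₁` in the ball, and for
`dH > 1` any two points of `h₁` and `h₂` in the ball.
-/

local notation "𝐣" => ((0 : ℂ), (1 : ℝ))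

open ComplexConjugate

lemma ee_neg_sq (ε : ℝ) : ee (-ε) ^ 2 = Complex.exp (Complex.I * (-ε : ℝ)) := by
  rw [ee, sq, ← Complex.exp_add]
  congr 1
  push_cast
  ring

lemma norm_ee_neg_sq_sub_one_le (ε : ℝ) : ‖ee (-ε) ^ 2 - 1‖ ≤ |ε| := by
  simpa [ee_neg_sq] using Real.norm_exp_I_mul_ofReal_sub_one_le (x := -ε)

lemma rotMat_mul_rotMat_neg_sub_one {u v₁ v₂ : ℂ} (h₁ : v₁ ≠ u) (h₂ : v₂ ≠ u) (ε : ℝ) :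
    rotMat u v₁ ε * rotMat u v₂ (-ε) - 1 =
      (((v₂ - u)⁻¹ - (v₁ - u)⁻¹) * (ee (-ε) ^ 2 - 1)) • !![u, -u ^ 2; 1, -u] := by
  have hd₁ : v₁ - u ≠ 0 := sub_ne_zero.mpr h₁
  have hd₂ : v₂ - u ≠ 0 := sub_ne_zero.mpr h₂
  have hee : ee ε ≠ 0 := Complex.exp_ne_zero _
  have hinv : ee (-ε) = (ee ε)⁻¹ := by
    rw [ee, ee, ← Complex.exp_neg]
    congr 1
    push_cast
    ring
  rw [Matrix.one_fin_two]
  ext i j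
  fin_cases i <;> fin_cases j <;>
  · simp only [rotMat, hinv, Matrix.smul_apply, Matrix.sub_apply, Matrix.mul_apply,
      Fin.sum_univ_two, Matrix.of_apply, Matrix.cons_val', Matrix.cons_val_zero, Matrix.cons_val_one,
      Matrix.cons_val_fin_one, Matrix.empty_val', smul_eq_mul, Fin.zero_eta,
      Fin.mk_one, Fin.isValue]
    field_simp
    ring

lemma mnorm_smul_le (β u : ℂ) :
    mnorm (β • !![u, -u ^ 2; 1, -u]) ≤ ‖β‖ * (1 + ‖u‖ ^ 2) := by
  simp only [mnorm, Matrix.smul_apply, Matrix.of_apply, Matrix.cons_val', Matrix.cons_val_zero,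
    Matrix.cons_val_one, Matrix.empty_val', Matrix.cons_val_fin_one, smul_eq_mul, norm_mul,
    norm_neg, norm_pow, norm_one]
  refine max_le (max_le ?_ ?_) (max_le ?_ ?_) <;> gcongr <;> nlinarith [sq_nonneg (‖u‖ - 1)]

lemma Real.cosh_sub_one_le_sq {x : ℝ} (hx : |x| ≤ 1) : Real.cosh x - 1 ≤ x ^ 2 := by
  have hx2 : |x ^ 2 / 2| ≤ 1 := by
    rw [abs_of_nonneg (by positivity)]
    nlinarith [sq_abs x, abs_nonneg x]
  have := (le_abs_self _).trans (Real.abs_exp_sub_one_le hx2)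
  rw [abs_of_nonneg (by positivity)] at this
  linarith [Real.cosh_le_exp_half_sq x]

lemma coshDist_comm (P Q : ℂ × ℝ) : coshDist P Q = coshDist Q P := by
  rw [coshDist, coshDist, norm_sub_rev, mul_right_comm]
  ring

lemma norm_fst_sub_sq_le {P Q : ℂ × ℝ} (hP : 0 < P.2) (hQ : 0 < Q.2) :
    ‖P.1 - Q.1‖ ^ 2 ≤ 2 * P.2 * Q.2 * (coshDist P Q - 1) := by
  rw [coshDist, add_sub_cancel_left, mul_div_cancel₀ _ (by positivity)]
  nlinarith

lemma one_le_coshDist {P Q : ℂ × ℝ} (hP : 0 < P.2) (hQ : 0 < Q.2) : 1 ≤ coshDist P Q := by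
  rw [coshDist, le_add_iff_nonneg_right]
  positivity

lemma coshDist_eq {P Q : ℂ × ℝ} (hP : 0 < P.2) (hQ : 0 < Q.2) :
    coshDist P Q = (‖P.1 - Q.1‖ ^ 2 + P.2 ^ 2 + Q.2 ^ 2) / (2 * P.2 * Q.2) := by
  rw [coshDist]
  field_simp
  ring

lemma coshDist_le_two_mul {P Q R : ℂ × ℝ} (hP : 0 < P.2) (hQ : 0 < Q.2) (hR : 0 < R.2) :
    coshDist P R ≤ 2 * coshDist P Q * coshDist Q R := by
  have htri : ‖P.1 - R.1‖ ≤ ‖P.1 - Q.1‖ + ‖Q.1 - R.1‖ := norm_sub_le_norm_sub_add_norm_sub _ _ _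
  have hsq := pow_le_pow_left₀ (norm_nonneg _) htri 2
  rw [coshDist_eq hP hR, coshDist_eq hP hQ, coshDist_eq hQ hR, div_le_iff₀ (by positivity)]
  field_simp
  nlinarith [sq_nonneg (‖P.1 - Q.1‖ * ‖Q.1 - R.1‖ - Q.2 ^ 2), sq_nonneg Q.2, mul_pos hP hR]

/-- Inversion in the unit sphere about `(u, 0)` followed by complex conjugation: an isometry of
`ℍ³` sending `u` to `∞`. -/
noncomputable def invAt (u : ℂ) (P : ℂ × ℝ) : ℂ × ℝ :=
  (conj (P.1 - u) / ((Complex.normSq (P.1 - u) + P.2 ^ 2 : ℝ) : ℂ),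
    P.2 / (Complex.normSq (P.1 - u) + P.2 ^ 2))

lemma invAt_snd_pos (u : ℂ) {P : ℂ × ℝ} (hP : 0 < P.2) : 0 < (invAt u P).2 :=
  div_pos hP (add_pos_of_nonneg_of_pos (Complex.normSq_nonneg _) (pow_pos hP 2))

lemma coshDist_invAt (u : ℂ) {P Q : ℂ × ℝ} (hP : 0 < P.2) (hQ : 0 < Q.2) :
    coshDist (invAt u P) (invAt u Q) = coshDist P Q := by
  have hNP := add_pos_of_nonneg_of_pos (Complex.normSq_nonneg (P.1 - u)) (pow_pos hP 2)
  have hNQ := add_pos_of_nonneg_of_pos (Complex.normSq_nonneg (Q.1 - u)) (pow_pos hQ 2)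
  simp only [coshDist, invAt, Complex.sq_norm, Complex.normSq_apply, Complex.sub_re,
    Complex.sub_im, Complex.div_ofReal_re, Complex.div_ofReal_im, Complex.conj_re,
    Complex.conj_im] at hNP hNQ ⊢
  field_simp
  ring

lemma snd_pos_of_mem_geodSet {u v : ℂ} (hv : v ≠ u) {P : ℂ × ℝ} (hP : P ∈ geodSet u v) :
    0 < P.2 := by
  obtain ⟨s, ⟨hs0, hs1⟩, rfl⟩ := hP
  have : 0 < s * (1 - s) := by nlinarith
  exact mul_pos (norm_pos_iff.mpr (sub_ne_zero.mpr hv)) (Real.sqrt_pos.mpr this)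

lemma invAt_fst_of_mem_geodSet {u v : ℂ} (hv : v ≠ u) {P : ℂ × ℝ} (hP : P ∈ geodSet u v) :
    (invAt u P).1 = (v - u)⁻¹ := by
  obtain ⟨s, ⟨hs0, hs1⟩, rfl⟩ := hP
  have hd : v - u ≠ 0 := sub_ne_zero.mpr hv
  have hss : 0 ≤ s * (1 - s) := by nlinarith
  have hN : Complex.normSq (s * (v - u)) + (‖v - u‖ * √(s * (1 - s))) ^ 2
      = s * Complex.normSq (v - u) := by
    rw [mul_pow, Real.sq_sqrt hss, Complex.sq_norm, Complex.normSq_mul, Complex.normSq_ofReal]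
    ring
  have hs : (s : ℂ) ≠ 0 := by exact_mod_cast hs0.ne'
  simp only [invAt, add_sub_cancel_left]
  rw [hN, Complex.inv_def, map_mul, Complex.conj_ofReal]
  push_cast
  field_simp

lemma invAt_snd_mul_le (u : ℂ) {P : ℂ × ℝ} (hP : 0 < P.2) :
    (invAt u P).2 * (1 + ‖u‖ ^ 2) ≤ 2 * coshDist P 𝐣 := by
  have htri : ‖u‖ ≤ ‖P.1 - u‖ + ‖P.1‖ := by
    simpa [norm_sub_rev u] using norm_sub_le_norm_sub_add_norm_sub u P.1 0
  have hsq := pow_le_pow_left₀ (norm_nonneg _) htri 2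
  rw [coshDist_eq hP one_pos, invAt]
  dsimp only
  rw [← Complex.sq_norm, div_mul_eq_mul_div, div_le_iff₀ (by positivity)]
  field_simp
  rw [sub_zero]
  nlinarith [sq_nonneg (‖P.1 - u‖ * ‖P.1‖ - P.2 ^ 2), mul_le_mul_of_nonneg_left hsq (sq_nonneg P.2)]

lemma sq_norm_inv_sub_inv_mul_le {u v₁ v₂ : ℂ} (h₁ : v₁ ≠ u) (h₂ : v₂ ≠ u) {P Q : ℂ × ℝ}
    (hP : P ∈ geodSet u v₁) (hQ : Q ∈ geodSet u v₂) :
    (‖(v₁ - u)⁻¹ - (v₂ - u)⁻¹‖ * (1 + ‖u‖ ^ 2)) ^ 2 ≤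
      8 * coshDist P 𝐣 * coshDist Q 𝐣 * (coshDist P Q - 1) := by
  have hP0 := snd_pos_of_mem_geodSet h₁ hP
  have hQ0 := snd_pos_of_mem_geodSet h₂ hQ
  have hgap := norm_fst_sub_sq_le (invAt_snd_pos u hP0) (invAt_snd_pos u hQ0)
  rw [invAt_fst_of_mem_geodSet h₁ hP, invAt_fst_of_mem_geodSet h₂ hQ,
    coshDist_invAt u hP0 hQ0] at hgap
  have hd : 0 ≤ coshDist P Q - 1 := sub_nonneg.mpr (one_le_coshDist hP0 hQ0)
  have hτP := invAt_snd_mul_le u hP0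
  have hτQ := invAt_snd_mul_le u hQ0
  have hτQ0 : 0 ≤ (invAt u Q).2 * (1 + ‖u‖ ^ 2) := by
    have := invAt_snd_pos u hQ0
    positivity
  calc (‖(v₁ - u)⁻¹ - (v₂ - u)⁻¹‖ * (1 + ‖u‖ ^ 2)) ^ 2
      ≤ 2 * (invAt u P).2 * (invAt u Q).2 * (coshDist P Q - 1) * (1 + ‖u‖ ^ 2) ^ 2 := by
        rw [mul_pow]
        gcongr
    _ = 2 * ((invAt u P).2 * (1 + ‖u‖ ^ 2)) * ((invAt u Q).2 * (1 + ‖u‖ ^ 2))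
          * (coshDist P Q - 1) := by ring
    _ ≤ 2 * (2 * coshDist P 𝐣) * (2 * coshDist Q 𝐣)
          * (coshDist P Q - 1) := by
        have := one_le_coshDist (Q := 𝐣) hP0 one_pos
        gcongr
    _ = _ := by ring

lemma sq_norm_inv_sub_inv_mul_le_of_coshDist_le {r₀ dH : ℝ} {u v₁ v₂ : ℂ} (h₁ : v₁ ≠ u)
    (h₂ : v₂ ≠ u) {P Q : ℂ × ℝ} (hP : P ∈ geodSet u v₁) (hPj : inBall r₀ P)
    (hQ : Q ∈ geodSet u v₂) (hdH : |dH| ≤ 1) (hPQ : coshDist P Q ≤ Real.cosh dH) :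
    (‖(v₁ - u)⁻¹ - (v₂ - u)⁻¹‖ * (1 + ‖u‖ ^ 2)) ^ 2 ≤ 32 * Real.cosh r₀ ^ 2 * dH ^ 2 := by
  have hP0 := snd_pos_of_mem_geodSet h₁ hP
  have hQ0 := snd_pos_of_mem_geodSet h₂ hQ
  have hPc : coshDist P 𝐣 ≤ Real.cosh r₀ := hPj.2
  have hPQ1 : coshDist P Q - 1 ≤ dH ^ 2 :=
    (sub_le_sub_right hPQ 1).trans (Real.cosh_sub_one_le_sq hdH)
  have hPQ2 : coshDist Q P ≤ 2 := by
    nlinarith [coshDist_comm Q P, sq_abs dH, abs_nonneg dH]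
  have hQc : coshDist Q 𝐣 ≤ 4 * Real.cosh r₀ :=
    calc coshDist Q 𝐣 ≤ 2 * coshDist Q P * coshDist P 𝐣 :=
          coshDist_le_two_mul hQ0 hP0 one_pos
      _ ≤ 2 * 2 * Real.cosh r₀ := by
        have := one_le_coshDist (Q := 𝐣) hP0 one_pos
        gcongr
      _ = 4 * Real.cosh r₀ := by ring
  calc _ ≤ _ := sq_norm_inv_sub_inv_mul_le h₁ h₂ hP hQ
    _ ≤ 8 * Real.cosh r₀ * (4 * Real.cosh r₀) * dH ^ 2 := by
      have := one_le_coshDist (Q := 𝐣) hQ0 one_pos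
      have := one_le_coshDist hP0 hQ0
      gcongr
    _ = 32 * Real.cosh r₀ ^ 2 * dH ^ 2 := by ring

lemma sq_norm_inv_sub_inv_mul_le_of_inBall {r₀ : ℝ} {u v₁ v₂ : ℂ} (h₁ : v₁ ≠ u) (h₂ : v₂ ≠ u)
    {P Q : ℂ × ℝ} (hP : P ∈ geodSet u v₁) (hPj : inBall r₀ P) (hQ : Q ∈ geodSet u v₂)
    (hQj : inBall r₀ Q) :
    (‖(v₁ - u)⁻¹ - (v₂ - u)⁻¹‖ * (1 + ‖u‖ ^ 2)) ^ 2 ≤ 16 * Real.cosh r₀ ^ 4 := by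
  have hP0 := snd_pos_of_mem_geodSet h₁ hP
  have hQ0 := snd_pos_of_mem_geodSet h₂ hQ
  have hPc : coshDist P 𝐣 ≤ Real.cosh r₀ := hPj.2
  have hQc : coshDist Q 𝐣 ≤ Real.cosh r₀ := hQj.2
  have hPQ : coshDist P Q - 1 ≤ 2 * Real.cosh r₀ * Real.cosh r₀ :=
    calc coshDist P Q - 1 ≤ 2 * coshDist P 𝐣 * coshDist Q 𝐣 := by
          rw [← coshDist_comm 𝐣 Q]
          linarith [coshDist_le_two_mul (Q := 𝐣) hP0 one_pos hQ0]
      _ ≤ 2 * Real.cosh r₀ * Real.cosh r₀ := by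
        have := one_le_coshDist (Q := 𝐣) hQ0 one_pos
        gcongr
  calc _ ≤ _ := sq_norm_inv_sub_inv_mul_le h₁ h₂ hP hQ
    _ ≤ 8 * Real.cosh r₀ * Real.cosh r₀ * (2 * Real.cosh r₀ * Real.cosh r₀) := by
      have := one_le_coshDist (Q := 𝐣) hQ0 one_pos
      have := one_le_coshDist hP0 hQ0
      gcongr
    _ = 16 * Real.cosh r₀ ^ 4 := by ring

lemma norm_inv_sub_inv_mul_le {r₀ : ℝ} {u v₁ v₂ : ℂ} (h₁ : v₁ ≠ u) (h₂ : v₂ ≠ u)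
    (hex₁ : ∃ P ∈ geodSet u v₁, inBall r₀ P) (hex₂ : ∃ P ∈ geodSet u v₂, inBall r₀ P)
    {dH : ℝ} (hdH : 0 ≤ dH)
    (hHaus : ∀ P ∈ geodSet u v₁, inBall r₀ P → ∃ Q ∈ geodSet u v₂, coshDist P Q ≤ Real.cosh dH) :
    ‖(v₁ - u)⁻¹ - (v₂ - u)⁻¹‖ * (1 + ‖u‖ ^ 2) ≤ 8 * Real.cosh r₀ ^ 2 * dH := by
  obtain ⟨P, hP, hPj⟩ := hex₁
  have hc : 1 ≤ Real.cosh r₀ ^ 2 := one_le_pow₀ (Real.one_le_cosh r₀)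
  refine le_of_pow_le_pow_left₀ two_ne_zero (by positivity) ?_
  rcases le_or_gt dH 1 with hdH1 | hdH1
  · obtain ⟨Q, hQ, hPQ⟩ := hHaus P hP hPj
    have hdH' : |dH| ≤ 1 := abs_le.mpr ⟨by linarith, hdH1⟩
    calc _ ≤ _ := sq_norm_inv_sub_inv_mul_le_of_coshDist_le h₁ h₂ hP hPj hQ hdH' hPQ
      _ ≤ (8 * Real.cosh r₀ ^ 2 * dH) ^ 2 := by
        nlinarith [mul_le_mul_of_nonneg_right hc
          (mul_nonneg (sq_nonneg (Real.cosh r₀)) (sq_nonneg dH))]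
  · obtain ⟨Q, hQ, hQj⟩ := hex₂
    calc _ ≤ _ := sq_norm_inv_sub_inv_mul_le_of_inBall h₁ h₂ hP hPj hQ hQj
      _ ≤ (8 * Real.cosh r₀ ^ 2 * dH) ^ 2 := by
        nlinarith [mul_le_mul_of_nonneg_left (by nlinarith : (1 : ℝ) ≤ dH ^ 2)
          (by positivity : (0 : ℝ) ≤ Real.cosh r₀ ^ 4)]

/-- Lemma A.4: for geodesics `h₁, h₂` with a common ideal endpoint `u`, both meeting the
ball `D_{r₀}(j)`, with `dH` a bound for the Hausdorff-type hyperbolic distance between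
`h₁ ∩ D_{r₀}(j)` and `h₂ ∩ D_{r₀}(j)`, one has
`‖R_{h₁}^ε R_{h₂}^{-ε} - id‖ ≤ C dH ε` for all `ε > 0`, with `C = C(r₀)`. -/
theorem stmt16 : ∀ r₀ > (0:ℝ), ∃ C > (0:ℝ), ∀ u v₁ v₂ : ℂ, v₁ ≠ u → v₂ ≠ u →
    (∃ P ∈ geodSet u v₁, inBall r₀ P) → (∃ P ∈ geodSet u v₂, inBall r₀ P) →
    ∀ dH : ℝ, 0 ≤ dH →
    (∀ P ∈ geodSet u v₁, inBall r₀ P → ∃ Q ∈ geodSet u v₂, coshDist P Q ≤ Real.cosh dH) →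
    (∀ P ∈ geodSet u v₂, inBall r₀ P → ∃ Q ∈ geodSet u v₁, coshDist P Q ≤ Real.cosh dH) →
    ∀ ε > (0:ℝ), mnorm (rotMat u v₁ ε * rotMat u v₂ (-ε) - 1) ≤ C * dH * ε := by
  intro r₀ _
  refine ⟨8 * Real.cosh r₀ ^ 2, by positivity, ?_⟩
  intro u v₁ v₂ h₁ h₂ hex₁ hex₂ dH hdH hHaus _ ε hε
  have hendpoints := norm_inv_sub_inv_mul_le h₁ h₂ hex₁ hex₂ hdH hHaus
  have hangle : ‖ee (-ε) ^ 2 - 1‖ ≤ ε := (norm_ee_neg_sq_sub_one_le ε).trans_eq (abs_of_pos hε)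
  rw [rotMat_mul_rotMat_neg_sub_one h₁ h₂]
  calc _ ≤ _ := mnorm_smul_le _ u
    _ = ‖(v₁ - u)⁻¹ - (v₂ - u)⁻¹‖ * (1 + ‖u‖ ^ 2) * ‖ee (-ε) ^ 2 - 1‖ := by
      rw [norm_mul, norm_sub_rev]
      ring
    _ ≤ 8 * Real.cosh r₀ ^ 2 * dH * ε := by gcongr
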